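/- Let b_1, b_2 be nonzero real numbers and m, n nonnegative integers. Then for every real x: Σ_{a=0}^{n} (−1)^a C(m+n+1, n−a) b_1^a b_2^{−a−1} E_{n−a}(b_1 x) E_{m+a+1}(b_2 x) − Σ_{a=0}^{m} (−1)^a C(m+n+1, m−a) b_2^a b_1^{−a−1} E_{m−a}(b_2 x) E_{n+a+1}(b_1 x) = ((−1)^m/(b_1^{m+1} b_2^{n+1})) Σ_{a=0}^{m+n+1} C(m+n+1, a) b_1^a b_2^{m+n+1−a} E_{m+n+1−a}(0) E_a(0) − 2 ((−b_2)^m / b_1^{m+1}) E_{m+n+1}(0). -/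

import Mathlib

/-- Higher-order Euler polynomial `E_m^{(α)}(z)` of real order `α`, defined as the `m`-th
Taylor coefficient (times `m!`) of the generating function `(2/(e^u+1))^α e^{uz}` at `u = 0`. -/
noncomputable def eulerH (α : ℝ) (m : ℕ) (z : ℝ) : ℝ :=
  iteratedDeriv m (fun u : ℝ => (2 / (Real.exp u + 1)) ^ α * Real.exp (u * z)) 0

/-!
With `f_z(u) = 2 e^{uz} / (e^u + 1)` we have `E_k(z) = f_z^{(k)}(0)`. Since `b₁x · b₂ = b₂x · b₁`,
the exponentials cancel in `f_{b₁x}(-b₂u) f_{b₂x}(b₁u)`, which leaves the identity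
`f_{b₁x}(-b₂u) f_{b₂x}(b₁u) + f_0(b₁u) f_0(b₂u) = 2 f_0(b₁u)`. Differentiate it `m + n + 1` times
at `0` by the Leibniz rule. Up to the factor `(-1)^n / (b₁^{m+1} b₂^{n+1})`, the left-hand side of
the theorem is the Leibniz sum of the first product, split at the index `n`. The remaining
`E_{m+n+1}(0)` term comes from the same identity at `x = 0` for `(b₁, b₂)` and for `(b₂, b₁)`:
their cross terms differ only by `u ↦ -u`.
-/

open Finset

noncomputable def eulerGen (z u : ℝ) : ℝ := 2 / (Real.exp u + 1) * Real.exp (u * z)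

lemma contDiff_eulerGen {n : WithTop ℕ∞} (z : ℝ) : ContDiff ℝ n (eulerGen z) :=
  (contDiff_const.div (Real.contDiff_exp.add contDiff_const) fun u => by positivity).mul
    (contDiff_id.mul contDiff_const).exp

lemma contDiff_eulerGen_comp_mul {n : WithTop ℕ∞} (c z : ℝ) :
    ContDiff ℝ n (fun u => eulerGen z (c * u)) :=
  (contDiff_eulerGen z).comp (contDiff_const.mul contDiff_id)

lemma eulerH_one (k : ℕ) (z : ℝ) : eulerH 1 k z = iteratedDeriv k (eulerGen z) 0 := by
  simp only [eulerH, Real.rpow_one]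
  rfl

lemma iteratedDeriv_eulerGen_comp_mul (k : ℕ) (c z : ℝ) :
    iteratedDeriv k (fun u => eulerGen z (c * u)) 0 = c ^ k * eulerH 1 k z := by
  simp only [iteratedDeriv_comp_const_mul (contDiff_eulerGen z), mul_zero, eulerH_one]

noncomputable def eulerConv (N : ℕ) (c₁ c₂ z₁ z₂ : ℝ) : ℝ :=
  ∑ j ∈ range (N + 1),
    (N.choose j : ℝ) * (c₁ ^ j * eulerH 1 j z₁) * (c₂ ^ (N - j) * eulerH 1 (N - j) z₂)

lemma iteratedDeriv_eulerGen_mul (N : ℕ) (c₁ c₂ z₁ z₂ : ℝ) :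
    iteratedDeriv N (fun u => eulerGen z₁ (c₁ * u) * eulerGen z₂ (c₂ * u)) 0
      = eulerConv N c₁ c₂ z₁ z₂ := by
  rw [iteratedDeriv_fun_mul (contDiff_eulerGen_comp_mul c₁ z₁).contDiffAt
    (contDiff_eulerGen_comp_mul c₂ z₂).contDiffAt]
  simp only [iteratedDeriv_eulerGen_comp_mul, eulerConv]

lemma eulerConv_comm (N : ℕ) (c₁ c₂ z₁ z₂ : ℝ) :
    eulerConv N c₁ c₂ z₁ z₂ = eulerConv N c₂ c₁ z₂ z₁ := by
  simp only [← iteratedDeriv_eulerGen_mul, mul_comm (eulerGen z₁ _)]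

lemma eulerConv_neg (N : ℕ) (c₁ c₂ z₁ z₂ : ℝ) :
    eulerConv N (-c₁) (-c₂) z₁ z₂ = (-1) ^ N * eulerConv N c₁ c₂ z₁ z₂ := by
  have h := iteratedDeriv_comp_neg N (fun u => eulerGen z₁ (c₁ * u) * eulerGen z₂ (c₂ * u)) 0
  simp only [mul_neg, ← neg_mul, neg_zero, smul_eq_mul, iteratedDeriv_eulerGen_mul] at h
  exact h

lemma eulerGen_mul_add_eulerGen_mul (b₁ b₂ x u : ℝ) :
    eulerGen (b₁ * x) (-b₂ * u) * eulerGen (b₂ * x) (b₁ * u)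
      + eulerGen 0 (b₁ * u) * eulerGen 0 (b₂ * u) = 2 * eulerGen 0 (b₁ * u) := by
  have h₁ : (Real.exp (b₂ * u))⁻¹ + 1 ≠ 0 := by positivity
  have h₂ : Real.exp (b₁ * u) + 1 ≠ 0 := by positivity
  have h₃ : Real.exp (b₂ * u) + 1 ≠ 0 := by positivity
  simp only [eulerGen, mul_zero, Real.exp_zero, mul_one]
  rw [mul_mul_mul_comm, ← Real.exp_add, show -b₂ * u * (b₁ * x) + b₁ * u * (b₂ * x) = 0 by ring,
    Real.exp_zero, mul_one, neg_mul, Real.exp_neg]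
  field_simp
  ring

lemma eulerConv_add (N : ℕ) (b₁ b₂ x : ℝ) :
    eulerConv N (-b₂) b₁ (b₁ * x) (b₂ * x) + eulerConv N b₁ b₂ 0 0
      = 2 * b₁ ^ N * eulerH 1 N 0 := by
  rw [← iteratedDeriv_eulerGen_mul, ← iteratedDeriv_eulerGen_mul,
    ← iteratedDeriv_fun_add
      ((contDiff_eulerGen_comp_mul _ _).mul (contDiff_eulerGen_comp_mul _ _)).contDiffAt
      ((contDiff_eulerGen_comp_mul _ _).mul (contDiff_eulerGen_comp_mul _ _)).contDiffAt]
  simp only [eulerGen_mul_add_eulerGen_mul, iteratedDeriv_const_mul_field,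
    iteratedDeriv_eulerGen_comp_mul, mul_assoc]

lemma neg_one_pow_add_mul_eulerConv (m n : ℕ) (b₁ b₂ : ℝ) :
    ((-1) ^ m + (-1) ^ n) * eulerConv (m + n + 1) b₁ b₂ 0 0
      = 2 * eulerH 1 (m + n + 1) 0 * ((-1) ^ n * b₁ ^ (m + n + 1) + (-1) ^ m * b₂ ^ (m + n + 1)) := by
  have h₁ := eulerConv_add (m + n + 1) b₁ b₂ 0
  have h₂ := eulerConv_add (m + n + 1) b₂ b₁ 0
  rw [eulerConv_comm _ b₂ b₁, eulerConv_comm _ (-b₁), ← neg_neg b₂, eulerConv_neg, neg_neg] at h₂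
  simp only [mul_zero] at h₁ h₂
  have hsq : (-1 : ℝ) ^ m * (-1) ^ m = 1 := by rw [← mul_pow]; norm_num
  linear_combination (-1) ^ m * h₂ + (-1) ^ n * h₁
    + (-1) ^ n * eulerConv (m + n + 1) (-b₂) b₁ 0 0 * hsq

/-- Substitute `j = n - a` in the first sum and `j = n + 1 + a` in the second. -/
lemma sum_sub_sum_eq_mul_sum {b₁ b₂ : ℝ} (hb₁ : b₁ ≠ 0) (hb₂ : b₂ ≠ 0) (e₁ e₂ : ℕ → ℝ)
    (m n : ℕ) :
    (∑ a ∈ range (n + 1), (-1 : ℝ) ^ a * ((m + n + 1).choose (n - a) : ℝ) *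
        b₁ ^ a * b₂ ^ (-(a : ℤ) - 1) * e₁ (n - a) * e₂ (m + a + 1))
      - (∑ a ∈ range (m + 1), (-1 : ℝ) ^ a * ((m + n + 1).choose (m - a) : ℝ) *
        b₂ ^ a * b₁ ^ (-(a : ℤ) - 1) * e₂ (m - a) * e₁ (n + a + 1))
    = (-1) ^ n / (b₁ ^ (m + 1) * b₂ ^ (n + 1)) * ∑ j ∈ range (m + n + 2),
        ((m + n + 1).choose j : ℝ) * ((-b₂) ^ j * e₁ j) *
          (b₁ ^ (m + n + 1 - j) * e₂ (m + n + 1 - j)) := by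
  have zpow_eq (b : ℝ) (a : ℕ) : b ^ (-(a : ℤ) - 1) = (b ^ (a + 1))⁻¹ := by
    rw [← zpow_natCast, ← zpow_neg]; push_cast; ring_nf
  have neg_one_pow_add (p q : ℕ) : (-1 : ℝ) ^ (p + q) = (-1) ^ q / (-1) ^ p := by
    rw [pow_add, eq_div_iff (pow_ne_zero _ (by norm_num)), mul_right_comm, ← mul_pow]
    norm_num
  rw [show m + n + 2 = (n + 1) + (m + 1) by ring, sum_range_add _ (n + 1) (m + 1), mul_add,
    ← sum_range_reflect, sub_eq_add_neg, mul_sum, mul_sum, ← sum_neg_distrib]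
  congr 1 <;> refine sum_congr rfl fun a ha => ?_ <;> have ha := mem_range.1 ha
  · obtain ⟨k, rfl⟩ := Nat.exists_eq_add_of_le (Nat.le_of_lt_succ ha)
    rw [show a + k + 1 - 1 - a = k by omega, show a + k - k = a by omega,
      show m + (a + k) + 1 - a = m + k + 1 by omega, zpow_eq, neg_one_pow_add, neg_pow b₂]
    field_simp
    ring
  · obtain ⟨k, rfl⟩ := Nat.exists_eq_add_of_le (Nat.le_of_lt_succ ha)
    rw [show a + k - a = k by omega, show a + k + n + 1 - (n + 1 + a) = k by omega,
      show n + 1 + a = n + a + 1 by omega,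
      Nat.choose_symm_of_eq_add (show a + k + n + 1 = n + a + 1 + k by omega),
      zpow_eq, neg_pow b₂, pow_succ (-1 : ℝ) (n + a), neg_one_pow_add]
    field_simp
    ring

theorem stmt_12 (b₁ b₂ : ℝ) (hb₁ : b₁ ≠ 0) (hb₂ : b₂ ≠ 0) (m n : ℕ) (x : ℝ) :
    (∑ a ∈ Finset.range (n + 1), (-1 : ℝ) ^ a * (Nat.choose (m + n + 1) (n - a) : ℝ) *
        b₁ ^ a * b₂ ^ (-(a : ℤ) - 1) * eulerH 1 (n - a) (b₁ * x) * eulerH 1 (m + a + 1) (b₂ * x))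
      - (∑ a ∈ Finset.range (m + 1), (-1 : ℝ) ^ a * (Nat.choose (m + n + 1) (m - a) : ℝ) *
        b₂ ^ a * b₁ ^ (-(a : ℤ) - 1) * eulerH 1 (m - a) (b₂ * x) * eulerH 1 (n + a + 1) (b₁ * x))
    = ((-1 : ℝ) ^ m / (b₁ ^ (m + 1) * b₂ ^ (n + 1))) *
        (∑ a ∈ Finset.range (m + n + 2), (Nat.choose (m + n + 1) a : ℝ) *
          b₁ ^ a * b₂ ^ (m + n + 1 - a) * eulerH 1 (m + n + 1 - a) 0 * eulerH 1 a 0)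
      - 2 * ((-b₂) ^ m / b₁ ^ (m + 1)) * eulerH 1 (m + n + 1) 0 := by
  refine (sum_sub_sum_eq_mul_sum hb₁ hb₂ (eulerH 1 · (b₁ * x)) (eulerH 1 · (b₂ * x)) m n).trans ?_
  have hS : ∑ a ∈ range (m + n + 2), ((m + n + 1).choose a : ℝ) *
      b₁ ^ a * b₂ ^ (m + n + 1 - a) * eulerH 1 (m + n + 1 - a) 0 * eulerH 1 a 0
        = eulerConv (m + n + 1) b₁ b₂ 0 0 :=
    sum_congr rfl fun a _ => by ring
  have hadd := eulerConv_add (m + n + 1) b₁ b₂ x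
  have hzero := neg_one_pow_add_mul_eulerConv m n b₁ b₂
  change _ * eulerConv (m + n + 1) (-b₂) b₁ (b₁ * x) (b₂ * x) = _
  rw [hS, neg_pow b₂]
  field_simp
  linear_combination (-1) ^ n * hadd - hzero
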